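/- arXiv:1704.03192 — 2 statements merged into one kernel-verified Lean document; each statement's English description precedes it below -/
import Mathlib

section
/- Let M be an n×n real matrix, A an invertible n×n matrix, and Σ a symmetric positive definite n×n matrix. If the partial sums S_k = Σ_{ℓ=0}^{k-1} M^ℓ A Σ Aᵀ (M^ℓ)ᵀ converge (entrywise) to a finite matrix as k → ∞, then ρ(M) < 1. -/
open Matrix Filter Finset

noncomputable def specRad {m : Type*} [Fintype m] [DecidableEq m] (M : Matrix m m ℝ) : ℝ :=
  sSup ((fun z : ℂ => ‖z‖) '' spectrum ℂ (M.map (algebraMap ℝ ℂ)))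

def RowStochastic {m : Type*} [Fintype m] (M : Matrix m m ℝ) : Prop :=
  (∀ i j, 0 ≤ M i j) ∧ ∀ i, ∑ j, M i j = 1

/-! If `μ` is an eigenvalue of `M` with left eigenvector `w`, the form `T ↦ w T w*` sends the
`ℓ`-th term `M^ℓ Q (M^ℓ)ᵀ` of the series to `|μ|^(2ℓ) · w Q w*`. The terms of a convergent series
tend to zero and `w Q w* ≠ 0` because `Q = A Σ Aᵀ` is positive definite, so `|μ|^(2ℓ) → 0`. -/

open Topology

lemma tendsto_nhds_zero_of_tendsto_sum_range {G : Type*} [AddCommGroup G] [TopologicalSpace G]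
    [IsTopologicalAddGroup G] {f : ℕ → G} {L : G}
    (h : Tendsto (fun k => ∑ i ∈ range k, f i) atTop (𝓝 L)) : Tendsto f atTop (𝓝 0) := by
  have := (h.comp (tendsto_add_atTop_nat 1)).sub h
  rw [sub_self] at this
  simpa [Function.comp_def, sum_range_succ] using this

namespace Matrix

variable {m : Type*} [Fintype m]

lemma exists_vecMul_eq_smul_of_mem_spectrum [DecidableEq m] {K : Type*} [Field K]
    {B : Matrix m m K} {μ : K} (h : μ ∈ spectrum K B) : ∃ w ≠ 0, w ᵥ* B = μ • w := by
  rw [spectrum.mem_iff, ← vecMul_injective_iff_isUnit] at h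
  obtain ⟨a, b, hab, hne⟩ := Function.not_injective_iff.mp h
  refine ⟨a - b, sub_ne_zero.mpr hne, ?_⟩
  have : (a - b) ᵥ* (algebraMap K _ μ - B) = 0 := by simp [sub_vecMul, hab]
  rw [vecMul_sub, sub_eq_zero, Algebra.algebraMap_eq_smul_one, vecMul_smul, vecMul_one] at this
  exact this.symm

lemma vecMul_pow_of_vecMul_eq_smul [DecidableEq m] {R : Type*} [CommSemiring R]
    {B : Matrix m m R} {w : m → R} {μ : R} (h : w ᵥ* B = μ • w) (ℓ : ℕ) :
    w ᵥ* B ^ ℓ = μ ^ ℓ • w := by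
  induction ℓ with
  | zero => simp
  | succ k ih => rw [pow_succ, ← vecMul_vecMul, ih, smul_vecMul, h, smul_smul, pow_succ]

lemma dotProduct_mul_mul_conjTranspose_mulVec_star {R : Type*} [CommRing R] [StarRing R]
    {B : Matrix m m R} {w : m → R} {μ : R} (h : w ᵥ* B = μ • w) (Q : Matrix m m R) :
    w ⬝ᵥ (B * Q * Bᴴ) *ᵥ star w = μ * star μ * (w ⬝ᵥ Q *ᵥ star w) := by
  have h' : Bᴴ *ᵥ star w = star μ • star w := by rw [← star_vecMul, h, star_smul]
  rw [← mulVec_mulVec, ← mulVec_mulVec, h', dotProduct_mulVec, h, mulVec_smul, smul_dotProduct,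
    dotProduct_smul, smul_eq_mul, smul_eq_mul, mul_assoc]

lemma re_dotProduct_map_mulVec_star (Q : Matrix m m ℝ) (w : m → ℂ) :
    (w ⬝ᵥ Q.map (algebraMap ℝ ℂ) *ᵥ star w).re
      = (fun i => (w i).re) ⬝ᵥ Q *ᵥ (fun i => (w i).re)
        + (fun i => (w i).im) ⬝ᵥ Q *ᵥ (fun i => (w i).im) := by
  simp only [dotProduct, mulVec, Finset.mul_sum, Complex.re_sum, ← Finset.sum_add_distrib]
  refine Finset.sum_congr rfl fun i _ => Finset.sum_congr rfl fun j _ => ?_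
  simp [Complex.mul_re, Complex.mul_im]

lemma PosDef.re_dotProduct_map_mulVec_star_pos {Q : Matrix m m ℝ} (hQ : Q.PosDef) {w : m → ℂ}
    (hw : w ≠ 0) : 0 < (w ⬝ᵥ Q.map (algebraMap ℝ ℂ) *ᵥ star w).re := by
  rw [re_dotProduct_map_mulVec_star]
  have hQ' : ∀ x ≠ 0, 0 < x ⬝ᵥ Q *ᵥ x := fun x hx => by
    simpa using hQ.dotProduct_mulVec_pos hx
  have hQ'' : ∀ x, 0 ≤ x ⬝ᵥ Q *ᵥ x := fun x => by
    simpa using hQ.posSemidef.dotProduct_mulVec_nonneg x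
  by_cases hre : (fun i => (w i).re) = 0
  · have him : (fun i => (w i).im) ≠ 0 := fun him =>
      hw (funext fun i => Complex.ext (congrFun hre i) (congrFun him i))
    exact add_pos_of_nonneg_of_pos (hQ'' _) (hQ' _ him)
  · exact add_pos_of_pos_of_nonneg (hQ' _ hre) (hQ'' _)

lemma map_pow_mul_mul_transpose_pow [DecidableEq m] (M Q : Matrix m m ℝ) (ℓ : ℕ) :
    (M ^ ℓ * Q * (M ^ ℓ)ᵀ).map (algebraMap ℝ ℂ)
      = M.map (algebraMap ℝ ℂ) ^ ℓ * Q.map (algebraMap ℝ ℂ) * (M.map (algebraMap ℝ ℂ) ^ ℓ)ᴴ := by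
  rw [← conjTranspose_eq_transpose_of_trivial, Matrix.map_mul, Matrix.map_mul,
    conjTranspose_map (algebraMap ℝ ℂ) fun x => by simp, Matrix.map_pow]

lemma norm_lt_one_of_tendsto_pow_mul_mul_transpose_pow [DecidableEq m] {M Q : Matrix m m ℝ}
    (hQ : Q.PosDef) (hlim : Tendsto (fun ℓ => M ^ ℓ * Q * (M ^ ℓ)ᵀ) atTop (𝓝 0)) {μ : ℂ}
    (hμ : μ ∈ spectrum ℂ (M.map (algebraMap ℝ ℂ))) : ‖μ‖ < 1 := by
  obtain ⟨w, hw0, hw⟩ := exists_vecMul_eq_smul_of_mem_spectrum hμ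
  set q : Matrix m m ℝ → ℂ := fun T => w ⬝ᵥ T.map (algebraMap ℝ ℂ) *ᵥ star w
  have hq_cont : Continuous q := by fun_prop
  have hq_pow : ∀ ℓ, q (M ^ ℓ * Q * (M ^ ℓ)ᵀ) = (Complex.normSq μ : ℂ) ^ ℓ * q Q := fun ℓ => by
    simp only [q, map_pow_mul_mul_transpose_pow,
      dotProduct_mul_mul_conjTranspose_mulVec_star (vecMul_pow_of_vecMul_eq_smul hw ℓ), star_pow,
      ← mul_pow, Complex.star_def, Complex.mul_conj]
  have hqQ : q Q ≠ 0 := fun h =>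
    (hQ.re_dotProduct_map_mulVec_star_pos hw0).ne' (by rw [← Complex.zero_re, ← h])
  have hq0 : q 0 = 0 := by simp [q]
  have hlim_q := hq0 ▸ (hq_cont.tendsto 0).comp hlim
  simp only [Function.comp_def, hq_pow] at hlim_q
  have hlim_pow : Tendsto (fun ℓ => (Complex.normSq μ : ℂ) ^ ℓ) atTop (𝓝 0) := by
    simpa [mul_inv_cancel_right₀ hqQ] using hlim_q.mul_const (q Q)⁻¹
  rw [tendsto_pow_atTop_nhds_zero_iff_norm_lt_one, Complex.norm_real, Real.norm_eq_abs,
    abs_of_nonneg (Complex.normSq_nonneg μ), Complex.normSq_eq_norm_sq] at hlim_pow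
  nlinarith [norm_nonneg μ]

end Matrix

lemma specRad_lt_of_forall_norm_lt {m : Type*} [Fintype m] [DecidableEq m] {M : Matrix m m ℝ}
    {r : ℝ} (hr : 0 < r) (h : ∀ μ ∈ spectrum ℂ (M.map (algebraMap ℝ ℂ)), ‖μ‖ < r) :
    specRad M < r := by
  rcases ((fun z : ℂ => ‖z‖) '' spectrum ℂ (M.map (algebraMap ℝ ℂ))).eq_empty_or_nonempty
    with he | hne
  · rwa [specRad, he, Real.sSup_empty]
  · rw [specRad, ((finite_spectrum _).image _).csSup_lt_iff hne]
    rintro _ ⟨μ, hμ, rfl⟩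
    exact h μ hμ

theorem stmt7 {n : ℕ} (M A Sig : Matrix (Fin n) (Fin n) ℝ)
    (hA : IsUnit A) (hSig : Sig.PosDef)
    (hconv : ∃ L : Matrix (Fin n) (Fin n) ℝ,
      Tendsto (fun k => ∑ ℓ ∈ Finset.range k, M ^ ℓ * (A * Sig * Aᵀ) * (M ^ ℓ)ᵀ)
        atTop (nhds L)) :
    specRad M < 1 := by
  obtain ⟨L, hL⟩ := hconv
  have hQ : (A * Sig * Aᵀ).PosDef := by
    simpa [conjTranspose_eq_transpose_of_trivial] using
      hSig.mul_mul_conjTranspose_same (vecMul_injective_iff_isUnit.mpr hA)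
  exact specRad_lt_of_forall_norm_lt one_pos fun μ hμ =>
    norm_lt_one_of_tendsto_pow_mul_mul_transpose_pow hQ
      (tendsto_nhds_zero_of_tendsto_sum_range hL) hμ
end

section
/- Let M be an n×n real matrix with ρ(M) < 1, P an N×N irreducible aperiodic stochastic matrix with stationary distribution π*, a ∈ ℝ^n, and for each state i in 𝒩 = {0,1}^n let diag(i) be the corresponding diagonal 0/1 matrix. Then μ(k) := M^k μ(0) + Σ_{ℓ=0}^{k-1} M^{k-1-ℓ} ((π(0)P^ℓ) ⊗ I_n) S converges as k → ∞ to (I - M)^{-1} Σ_{i∈𝒩} π*_i diag(i) a, where S is the stacked vector with blocks diag(i)a, for any initial distribution π(0) and any μ(0) ∈ ℝ^n. -/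
open Matrix Filter Finset MeasureTheory

/-!
By Gelfand's formula, `ρ(M) < 1` makes `∑ ‖M ^ k‖` converge, so `M ^ k μ(0) → 0` and
`(I - M)⁻¹ = ∑ M ^ j`. Since some power `P ^ K` has all entries at least `δ > 0`, Doeblin's bound
contracts the `ℓ¹` distance `‖π(0) P ^ ℓ - π*‖₁` by the factor `1 - N δ` every `K` steps, so the
inputs `((π(0) P ^ ℓ) ⊗ I_n) S` converge to `∑ π*_i diag(i) a`. Finally, the convolution of the
summable sequence `M ^ j` with a convergent input converges, by Tannery's theorem, to
`(∑ M ^ j)` applied to the limit of the input.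
-/

open scoped Topology

attribute [local instance] Matrix.linftyOpNormedAddCommGroup Matrix.linftyOpNormedRing
  Matrix.linftyOpNormedAlgebra

theorem summable_norm_pow_of_spectralRadius_lt_one {A : Type*} [NormedRing A]
    [NormedAlgebra ℂ A] [CompleteSpace A] {a : A} (ha : spectralRadius ℂ a < 1) :
    Summable fun n => ‖a ^ n‖ := by
  obtain ⟨r, hρr, hr⟩ := ENNReal.lt_iff_exists_nnreal_btwn.mp ha
  have hr1 : (r : ℝ) < 1 := mod_cast hr
  refine .of_norm_bounded_eventually_nat (summable_geometric_of_lt_one r.2 hr1) ?_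
  filter_upwards [(spectrum.pow_norm_pow_one_div_tendsto_nhds_spectralRadius a).eventually_lt_const
    hρr, eventually_gt_atTop 0] with n hn hn0
  rw [ENNReal.ofReal_lt_iff_lt_toReal (by positivity) ENNReal.coe_ne_top, ENNReal.coe_toReal,
    one_div] at hn
  have hpow := (Real.rpow_inv_lt_iff_of_pos (norm_nonneg _) r.2 (Nat.cast_pos.mpr hn0)).mp hn
  rw [Real.rpow_natCast] at hpow
  exact (norm_norm _).trans_le hpow.le

theorem Matrix.summable_norm_pow_of_specRad_lt_one {m : Type*} [Fintype m] [DecidableEq m]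
    {M : Matrix m m ℝ} (hM : specRad M < 1) : Summable fun k => ‖M ^ k‖ := by
  set M' := M.map (algebraMap ℝ ℂ)
  have : CompleteSpace (Matrix m m ℂ) := FiniteDimensional.complete ℂ _
  have hbdd : BddAbove ((fun z : ℂ => ‖z‖) '' spectrum ℂ M') :=
    ((spectrum.isCompact M').image continuous_norm).bddAbove
  have hρ : spectralRadius ℂ M' < 1 := by
    refine lt_of_le_of_lt (iSup₂_le fun z hz => ?_) (ENNReal.ofReal_lt_one.mpr hM)
    rw [← enorm_eq_nnnorm, ← ofReal_norm]
    exact ENNReal.ofReal_le_ofReal (le_csSup hbdd ⟨z, hz, rfl⟩)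
  refine (summable_norm_pow_of_spectralRadius_lt_one hρ).congr fun k => ?_
  rw [← Matrix.map_pow, ← coe_nnnorm, ← coe_nnnorm, linfty_opNNNorm_def, linfty_opNNNorm_def]
  simp [Complex.nnnorm_real]

theorem Matrix.tendsto_sum_range_mulVec_of_summable_norm {m : Type*} [Fintype m] [DecidableEq m]
    {A : ℕ → Matrix m m ℝ} (hA : Summable fun j => ‖A j‖) {v : ℕ → m → ℝ} {b : m → ℝ}
    (hv : Tendsto v atTop (𝓝 b)) :
    Tendsto (fun k => ∑ ℓ ∈ range k, A (k - 1 - ℓ) *ᵥ v ℓ) atTop (𝓝 ((∑' j, A j) *ᵥ b)) := by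
  obtain ⟨C, hC⟩ := hv.norm.bddAbove_range
  let f : ℕ → ℕ → m → ℝ := fun k j => if j < k then A j *ᵥ v (k - 1 - j) else 0
  have hf : ∀ k, ∑' j, f k j = ∑ ℓ ∈ range k, A (k - 1 - ℓ) *ᵥ v ℓ := fun k => by
    rw [tsum_eq_sum (s := range k) fun j hj => if_neg (by simpa using hj),
      ← sum_range_reflect]
    refine sum_congr rfl fun j hj => ?_
    have hjk := mem_range.mp hj
    rw [if_pos (by omega), Nat.sub_sub_self (by omega)]
  have hlim : ∀ j, Tendsto (f · j) atTop (𝓝 (A j *ᵥ b)) := fun j => by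
    have hshift : Tendsto (fun k => k - 1 - j) atTop atTop := by
      simpa only [Nat.sub_sub, add_comm 1 j] using tendsto_sub_atTop_nat (j + 1)
    refine (((continuous_const.matrix_mulVec continuous_id).tendsto b).comp
      (hv.comp hshift)).congr' ?_
    filter_upwards [eventually_gt_atTop j] with k hk
    simp [f, hk]
  have hbound : ∀ k j, ‖f k j‖ ≤ ‖A j‖ * C := fun k j => by
    by_cases hjk : j < k
    · simp only [f, if_pos hjk]
      exact (linfty_opNorm_mulVec _ _).trans
        (mul_le_mul_of_nonneg_left (hC ⟨_, rfl⟩) (norm_nonneg _))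
    · simp only [f, if_neg hjk, norm_zero]
      exact mul_nonneg (norm_nonneg _) ((norm_nonneg _).trans (hC ⟨0, rfl⟩))
  have : CompleteSpace (Matrix m m ℝ) := FiniteDimensional.complete ℝ _
  have hmap : (∑' j, A j) *ᵥ b = ∑' j, A j *ᵥ b :=
    LinearMap.toContinuousLinearMap ((mulVecBilin ℝ ℝ).flip b) |>.map_tsum hA.of_norm
  rw [hmap]
  simpa only [hf] using tendsto_tsum_of_dominated_convergence (hA.mul_right C) hlim
    (.of_forall hbound)

theorem tendsto_zero_of_antitone_of_le_mul_shift {E : ℕ → ℝ} (hE : Antitone E)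
    (hE0 : ∀ ℓ, 0 ≤ E ℓ) {q : ℝ} (hq0 : 0 ≤ q) (hq1 : q < 1) {K : ℕ} (hK : 0 < K)
    (hcontr : ∀ ℓ, E (ℓ + K) ≤ q * E ℓ) : Tendsto E atTop (𝓝 0) := by
  have hgeom : ∀ m, E (K * m) ≤ q ^ m * E 0 := fun m => by
    induction m with
    | zero => simp
    | succ m ih =>
      calc E (K * (m + 1)) = E (K * m + K) := by rw [mul_add_one]
        _ ≤ q * E (K * m) := hcontr _
        _ ≤ q * (q ^ m * E 0) := mul_le_mul_of_nonneg_left ih hq0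
        _ = q ^ (m + 1) * E 0 := by ring
  have hlim : Tendsto (fun ℓ => q ^ (ℓ / K) * E 0) atTop (𝓝 0) := by
    simpa using ((tendsto_pow_atTop_nhds_zero_of_lt_one hq0 hq1).comp
      (Nat.tendsto_div_const_atTop hK.ne')).mul_const (E 0)
  exact squeeze_zero hE0 (fun ℓ => (hE (Nat.mul_div_le ℓ K)).trans (hgeom _)) hlim

namespace RowStochastic

variable {ι : Type*} [Fintype ι] {P Q : Matrix ι ι ℝ}

theorem mul (hP : RowStochastic P) (hQ : RowStochastic Q) : RowStochastic (P * Q) := by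
  refine ⟨fun i j => sum_nonneg fun t _ => mul_nonneg (hP.1 i t) (hQ.1 t j), fun i => ?_⟩
  simp only [mul_apply]
  rw [sum_comm]
  simp [← mul_sum, hQ.2, hP.2]

theorem sum_vecMul (hQ : RowStochastic Q) (u : ι → ℝ) : ∑ j, (u ᵥ* Q) j = ∑ i, u i := by
  simp only [vecMul, dotProduct]
  rw [sum_comm]
  simp [← mul_sum, hQ.2]

theorem sum_abs_vecMul_le (hQ : RowStochastic Q) {δ : ℝ} (hδ : ∀ i j, δ ≤ Q i j)
    {u : ι → ℝ} (hu : ∑ i, u i = 0) :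
    ∑ j, |(u ᵥ* Q) j| ≤ (1 - Fintype.card ι * δ) * ∑ i, |u i| := by
  have key : ∀ j, |(u ᵥ* Q) j| ≤ ∑ i, |u i| * (Q i j - δ) := fun j => by
    have h : (u ᵥ* Q) j = ∑ i, u i * (Q i j - δ) := by
      simp only [vecMul, dotProduct, mul_sub, sum_sub_distrib, ← sum_mul, hu, zero_mul, sub_zero]
    rw [h]
    refine (abs_sum_le_sum_abs _ _).trans (sum_le_sum fun i _ => ?_)
    rw [abs_mul, abs_of_nonneg (sub_nonneg.2 (hδ i j))]
  calc ∑ j, |(u ᵥ* Q) j| ≤ ∑ j, ∑ i, |u i| * (Q i j - δ) := sum_le_sum fun j _ => key j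
    _ = ∑ i, |u i| * (1 - Fintype.card ι * δ) := by
      rw [sum_comm]
      refine sum_congr rfl fun i _ => ?_
      rw [← mul_sum, sum_sub_distrib, hQ.2 i, sum_const, card_univ, nsmul_eq_mul]
    _ = (1 - Fintype.card ι * δ) * ∑ i, |u i| := by rw [← sum_mul, mul_comm]

variable [DecidableEq ι]

theorem one : RowStochastic (1 : Matrix ι ι ℝ) :=
  ⟨fun i j => by by_cases h : i = j <;> simp [one_apply, h], fun i => by simp [one_apply]⟩

theorem pow (hP : RowStochastic P) (k : ℕ) : RowStochastic (P ^ k) := by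
  induction k with
  | zero => simpa using one
  | succ k ih => simpa [pow_succ] using ih.mul hP

theorem pos_pow_succ (hP : RowStochastic P) {k : ℕ} (hk : ∀ i j, 0 < (P ^ k) i j) (i j : ι) :
    0 < (P ^ (k + 1)) i j := by
  obtain ⟨t, -, ht⟩ : ∃ t ∈ univ, (0 : ℝ) < P i t :=
    exists_lt_of_sum_lt (by simp [hP.2 i])
  rw [pow_succ', mul_apply]
  exact sum_pos' (fun s _ => mul_nonneg (hP.1 i s) ((hP.pow k).1 s j))
    ⟨t, mem_univ _, mul_pos ht (hk t j)⟩

variable [Nonempty ι]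

theorem tendsto_vecMul_pow_of_sum_eq_zero (hP : RowStochastic P)
    (hprim : ∃ k, ∀ i j, 0 < (P ^ k) i j) {u : ι → ℝ} (hu : ∑ i, u i = 0) :
    Tendsto (fun ℓ => u ᵥ* P ^ ℓ) atTop (𝓝 0) := by
  obtain ⟨k, hk⟩ := hprim
  -- `k` may be `0`; the contraction below needs the positive power `P ^ (k + 1)`.
  obtain ⟨p, -, hp⟩ := exists_min_image univ (fun p : ι × ι => (P ^ (k + 1)) p.1 p.2)
    univ_nonempty
  set δ := (P ^ (k + 1)) p.1 p.2
  have hδ : ∀ i j, δ ≤ (P ^ (k + 1)) i j := fun i j => hp (i, j) (mem_univ _)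
  have hδ0 : 0 < δ := hP.pos_pow_succ hk p.1 p.2
  set q : ℝ := 1 - Fintype.card ι * δ
  have hq0 : 0 ≤ q := by
    obtain ⟨i⟩ := ‹Nonempty ι›
    have := sum_le_sum fun j (_ : j ∈ univ) => hδ i j
    rw [(hP.pow (k + 1)).2 i, sum_const, card_univ, nsmul_eq_mul] at this
    linarith
  have hq1 : q < 1 := by
    have : (0 : ℝ) < Fintype.card ι := Nat.cast_pos.mpr Fintype.card_pos
    nlinarith
  set E : ℕ → ℝ := fun ℓ => ∑ i, |(u ᵥ* P ^ ℓ) i|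
  have hE0 : ∀ ℓ, 0 ≤ E ℓ := fun ℓ => sum_nonneg fun i _ => abs_nonneg _
  have hsum : ∀ ℓ, ∑ i, (u ᵥ* P ^ ℓ) i = 0 := fun ℓ => ((hP.pow ℓ).sum_vecMul u).trans hu
  have hanti : Antitone E := antitone_nat_of_succ_le fun ℓ => by
    simpa [E, pow_succ, ← vecMul_vecMul] using hP.sum_abs_vecMul_le (δ := 0) hP.1 (hsum ℓ)
  have hcontr : ∀ ℓ, E (ℓ + (k + 1)) ≤ q * E ℓ := fun ℓ => by
    simpa only [E, pow_add, ← vecMul_vecMul] using (hP.pow (k + 1)).sum_abs_vecMul_le hδ (hsum ℓ)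
  refine squeeze_zero_norm (fun ℓ => (pi_norm_le_iff_of_nonneg (hE0 ℓ)).2 fun i => ?_)
    (tendsto_zero_of_antitone_of_le_mul_shift hanti hE0 hq0 hq1 k.succ_pos hcontr)
  exact single_le_sum (f := fun i => |(u ᵥ* P ^ ℓ) i|) (fun i _ => abs_nonneg _) (mem_univ i)

theorem tendsto_vecMul_pow (hP : RowStochastic P) (hprim : ∃ k, ∀ i j, 0 < (P ^ k) i j)
    {π0 πs : ι → ℝ} (hsum : ∑ i, π0 i = ∑ i, πs i) (hstat : πs ᵥ* P = πs) :
    Tendsto (fun ℓ => π0 ᵥ* P ^ ℓ) atTop (𝓝 πs) := by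
  have hfix : ∀ ℓ, πs ᵥ* P ^ ℓ = πs := fun ℓ => by
    induction ℓ with
    | zero => simp
    | succ ℓ ih => rw [pow_succ, ← vecMul_vecMul, ih, hstat]
  have h := hP.tendsto_vecMul_pow_of_sum_eq_zero hprim (u := π0 - πs)
    (by simp [sum_sub_distrib, hsum])
  simpa [sub_vecMul, hfix] using h.add_const πs

end RowStochastic

theorem stmt16_general {n : ℕ} (M : Matrix (Fin n) (Fin n) ℝ) (hM : specRad M < 1)
    (a : Fin n → ℝ)
    (P : Matrix (Fin n → Bool) (Fin n → Bool) ℝ) (hP : RowStochastic P)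
    (hprim : ∃ k, ∀ i j, 0 < (P ^ k) i j)
    (π0 πs : (Fin n → Bool) → ℝ)
    (hπ0 : (∀ i, 0 ≤ π0 i) ∧ ∑ i, π0 i = 1)
    (hπs : (∀ i, 0 ≤ πs i) ∧ ∑ i, πs i = 1)
    (hstat : πs ᵥ* P = πs)
    (d : (Fin n → Bool) → Fin n → ℝ)
    (S : (Fin n → Bool) × Fin n → ℝ)
    (hS : ∀ i r, S (i, r) = (Matrix.diagonal (d i) *ᵥ a) r)
    (μ0 : Fin n → ℝ) :
    Tendsto (fun k => M ^ k *ᵥ μ0 +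
        ∑ ℓ ∈ Finset.range k,
          M ^ (k - 1 - ℓ) *ᵥ (fun r => ∑ i, (π0 ᵥ* P ^ ℓ) i * S (i, r)))
      atTop (nhds ((1 - M)⁻¹ *ᵥ ∑ i, πs i • (Matrix.diagonal (d i) *ᵥ a))) := by
  have hsum := summable_norm_pow_of_specRad_lt_one hM
  have : CompleteSpace (Matrix (Fin n) (Fin n) ℝ) := FiniteDimensional.complete ℝ _
  have hinv : (1 - M)⁻¹ = ∑' j, M ^ j := inv_eq_right_inv hsum.of_norm.one_sub_mul_tsum_pow
  have hfree : Tendsto (fun k => M ^ k *ᵥ μ0) atTop (𝓝 0) := by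
    simpa only [Function.comp_def, id, zero_mulVec] using
      ((continuous_id.matrix_mulVec (continuous_const (y := μ0))).tendsto 0).comp
        hsum.of_norm.tendsto_atTop_zero
  have hdistr := hP.tendsto_vecMul_pow hprim (hπ0.2.trans hπs.2.symm) hstat
  have hinput : Tendsto (fun ℓ r => ∑ i, (π0 ᵥ* P ^ ℓ) i * S (i, r)) atTop
      (𝓝 (∑ i, πs i • (diagonal (d i) *ᵥ a))) := by
    have hcont : Continuous fun (p : (Fin n → Bool) → ℝ) r => ∑ i, p i * S (i, r) := by
      fun_prop
    have hlim : (fun r => ∑ i, πs i * S (i, r)) = ∑ i, πs i • (diagonal (d i) *ᵥ a) := by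
      ext r
      simp [hS, Finset.sum_apply]
    exact hlim ▸ (hcont.tendsto πs).comp hdistr
  rw [hinv]
  simpa using hfree.add (tendsto_sum_range_mulVec_of_summable_norm hsum hinput)

theorem stmt16 {n : ℕ} (M : Matrix (Fin n) (Fin n) ℝ) (hM : specRad M < 1)
    (a : Fin n → ℝ)
    (P : Matrix (Fin n → Bool) (Fin n → Bool) ℝ) (hP : RowStochastic P)
    (hprim : ∃ k, ∀ i j, 0 < (P ^ k) i j)
    (π0 πs : (Fin n → Bool) → ℝ)
    (hπ0 : (∀ i, 0 ≤ π0 i) ∧ ∑ i, π0 i = 1)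
    (hπs : (∀ i, 0 ≤ πs i) ∧ ∑ i, πs i = 1)
    (hstat : πs ᵥ* P = πs)
    (d : (Fin n → Bool) → Fin n → ℝ)
    (hd : ∀ i r, d i r = if i r then 1 else 0)
    (S : (Fin n → Bool) × Fin n → ℝ)
    (hS : ∀ i r, S (i, r) = (Matrix.diagonal (d i) *ᵥ a) r)
    (μ0 : Fin n → ℝ) :
    Tendsto (fun k => M ^ k *ᵥ μ0 +
        ∑ ℓ ∈ Finset.range k,
          M ^ (k - 1 - ℓ) *ᵥ (fun r => ∑ i, (π0 ᵥ* P ^ ℓ) i * S (i, r)))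
      atTop (nhds ((1 - M)⁻¹ *ᵥ ∑ i, πs i • (Matrix.diagonal (d i) *ᵥ a))) :=
  stmt16_general M hM a P hP hprim π0 πs hπ0 hπs hstat d S hS μ0
end
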